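/- arXiv:2209.14516 — 2 statements merged into one kernel-verified Lean document; each statement's English description precedes it below -/
import Mathlib

section
/- There exist loopless matroids M1, M2, M1', M2' on a common ground set E of size 4, with rank functions r1, r2, r1', r2', such that r1(X) + r2(X) = r1'(X) + r2'(X) for every X ⊆ E, and yet max(r1(E), r2(E)) ≠ max(r1'(E), r2'(E)). (Hence the maximum rank oracle of two matroids is not determined by their rank sum oracle.) -/
open Classical Finset

structure FinMatroid (α : Type) : Type where
  Indep : Finset α → Prop
  empty_indep : Indep ∅
  subset_indep : ∀ ⦃I J : Finset α⦄, Indep J → I ⊆ J → Indep I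
  exchange : ∀ ⦃I J : Finset α⦄, Indep I → Indep J → I.card < J.card →
    ∃ x ∈ J \ I, Indep (insert x I)

noncomputable def FinMatroid.rank {α : Type} (M : FinMatroid α) (X : Finset α) : ℕ :=
  (X.powerset.filter (fun Y => M.Indep Y)).sup Finset.card

lemma my_rank_congr {α : Type} [DecidableEq α] (M : FinMatroid α)
    (p : Finset α → Prop) [DecidablePred p] (h : ∀ I, M.Indep I ↔ p I) (X : Finset α) :
    M.rank X = (X.powerset.filter p).sup Finset.card := by
  unfold FinMatroid.rank
  congr 1
  exact Finset.filter_congr (fun x _ => h x)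

def L1 : Finset (Finset (Fin 4)) :=
  {∅, {0}, {1}, {2}, {3}, {0,2}, {0,3}, {1,2}, {1,3}}

def L1' : Finset (Finset (Fin 4)) :=
  {∅, {0}, {1}, {2}, {3}, {0,1}, {0,2}, {0,3}, {1,2}, {1,3}, {0,1,2}, {0,1,3}}

def L2' : Finset (Finset (Fin 4)) :=
  {∅, {0}, {1}, {2}, {3}, {0,2}, {0,3}, {1,2}, {1,3}, {2,3}, {0,2,3}, {1,2,3}}

lemma L1_empty : (∅ : Finset (Fin 4)) ∈ L1 := by decide
lemma L1_subset : ∀ ⦃I J : Finset (Fin 4)⦄, J ∈ L1 → I ⊆ J → I ∈ L1 := by decide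
lemma L1_exch : ∀ ⦃I J : Finset (Fin 4)⦄, I ∈ L1 → J ∈ L1 → I.card < J.card →
    ∃ x ∈ J \ I, insert x I ∈ L1 := by decide
lemma L1'_empty : (∅ : Finset (Fin 4)) ∈ L1' := by decide
lemma L1'_subset : ∀ ⦃I J : Finset (Fin 4)⦄, J ∈ L1' → I ⊆ J → I ∈ L1' := by decide
lemma L1'_exch : ∀ ⦃I J : Finset (Fin 4)⦄, I ∈ L1' → J ∈ L1' → I.card < J.card →
    ∃ x ∈ J \ I, insert x I ∈ L1' := by decide
lemma L2'_empty : (∅ : Finset (Fin 4)) ∈ L2' := by decide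
lemma L2'_subset : ∀ ⦃I J : Finset (Fin 4)⦄, J ∈ L2' → I ⊆ J → I ∈ L2' := by decide
lemma L2'_exch : ∀ ⦃I J : Finset (Fin 4)⦄, I ∈ L2' → J ∈ L2' → I.card < J.card →
    ∃ x ∈ J \ I, insert x I ∈ L2' := by decide
lemma free_exch : ∀ ⦃I J : Finset (Fin 4)⦄, True → True → I.card < J.card →
    ∃ x ∈ J \ I, True := by
  intro I J _ _ h
  obtain ⟨x, hxJ, hxI⟩ := (Finset.not_subset (s := J) (t := I)).mp (fun hs => absurd (Finset.card_le_card hs) (by omega))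
  exact ⟨x, Finset.mem_sdiff.mpr ⟨hxJ, hxI⟩, trivial⟩

def M1 : FinMatroid (Fin 4) := ⟨(· ∈ L1), L1_empty, L1_subset, by
  have e : (fun a b => propDecidable (a = b)) = instDecidableEqFin 4 := Subsingleton.elim _ _
  rw [e]; exact L1_exch⟩
def M2 : FinMatroid (Fin 4) := ⟨fun _ => True, trivial, fun _ _ _ _ => trivial, by
  have e : (fun a b => propDecidable (a = b)) = instDecidableEqFin 4 := Subsingleton.elim _ _
  rw [e]; exact free_exch⟩
def M1' : FinMatroid (Fin 4) := ⟨(· ∈ L1'), L1'_empty, L1'_subset, by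
  have e : (fun a b => propDecidable (a = b)) = instDecidableEqFin 4 := Subsingleton.elim _ _
  rw [e]; exact L1'_exch⟩
def M2' : FinMatroid (Fin 4) := ⟨(· ∈ L2'), L2'_empty, L2'_subset, by
  have e : (fun a b => propDecidable (a = b)) = instDecidableEqFin 4 := Subsingleton.elim _ _
  rw [e]; exact L2'_exch⟩

lemma loop1 : ∀ a : Fin 4, ({a} : Finset (Fin 4)) ∈ L1 := by decide
lemma loop1' : ∀ a : Fin 4, ({a} : Finset (Fin 4)) ∈ L1' := by decide
lemma loop2' : ∀ a : Fin 4, ({a} : Finset (Fin 4)) ∈ L2' := by decide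

/-- There exist loopless matroids `M1, M2, M1', M2'` on a common ground set of size 4
with `r1 X + r2 X = r1' X + r2' X` for every `X`, yet
`max (r1 E) (r2 E) ≠ max (r1' E) (r2' E)`: the maximum rank oracle is not determined
by the rank sum oracle. -/
theorem stmt_10 :
    ∃ M1 M2 M1' M2' : FinMatroid (Fin 4),
      (∀ a : Fin 4, M1.Indep {a}) ∧ (∀ a, M2.Indep {a}) ∧
      (∀ a, M1'.Indep {a}) ∧ (∀ a, M2'.Indep {a}) ∧
      (∀ X : Finset (Fin 4), M1.rank X + M2.rank X = M1'.rank X + M2'.rank X) ∧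
      max (M1.rank Finset.univ) (M2.rank Finset.univ)
        ≠ max (M1'.rank Finset.univ) (M2'.rank Finset.univ) := by
  have h1 := my_rank_congr M1 (· ∈ L1) (fun _ => Iff.rfl)
  have h2 := my_rank_congr M2 (fun _ => True) (fun _ => Iff.rfl)
  have h1' := my_rank_congr M1' (· ∈ L1') (fun _ => Iff.rfl)
  have h2' := my_rank_congr M2' (· ∈ L2') (fun _ => Iff.rfl)
  refine ⟨M1, M2, M1', M2', loop1, fun _ => trivial, loop1', loop2', ?_, ?_⟩
  · intro X
    rw [h1, h2, h1', h2']
    revert X; decide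
  · rw [h1, h2, h1', h2']
    decide
end

section
/- Let M1 = (E,𝓘1) and M2 = (E,𝓘2) be matroids on a common finite ground set E, let w : E → ℝ, let k ∈ ℕ, and let I be w-maximal in 𝓘1^k ∩ 𝓘2^k. Then any shortest cheapest S_I–T_I path in D'[I] is also a shortest cheapest S_I–T_I path in D[I]. -/
open Classical Finset

def A1 {α : Type} (M1 : FinMatroid α) (I : Finset α) (a b : α) : Prop :=
  a ∈ I ∧ b ∉ I ∧ M1.Indep (insert b (I.erase a))

def A2 {α : Type} (M2 : FinMatroid α) (I : Finset α) (a b : α) : Prop :=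
  a ∉ I ∧ b ∈ I ∧ M2.Indep (insert a (I.erase b))

def DArcs {α : Type} (M1 M2 : FinMatroid α) (I : Finset α) (a b : α) : Prop :=
  A1 M1 I a b ∨ A2 M2 I a b

def inS {α : Type} (M1 : FinMatroid α) (I : Finset α) (s : α) : Prop :=
  s ∉ I ∧ M1.Indep (insert s I)

def inT {α : Type} (M2 : FinMatroid α) (I : Finset α) (t : α) : Prop :=
  t ∉ I ∧ M2.Indep (insert t I)

def A1' {α : Type} (M1 : FinMatroid α) (I : Finset α) (a b : α) : Prop :=
  A1 M1 I a b ∧ ¬ inS M1 I b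

def A2' {α : Type} (M2 : FinMatroid α) (I : Finset α) (a b : α) : Prop :=
  A2 M2 I a b ∧ ¬ inT M2 I a

def DArcs' {α : Type} (M1 M2 : FinMatroid α) (I : Finset α) (a b : α) : Prop :=
  A1' M1 I a b ∨ A2' M2 I a b

def IsCycle {α : Type} (A : α → α → Prop) (P : List α) : Prop :=
  ∃ h : P ≠ [], P.Nodup ∧ P.Chain' A ∧ A (P.getLast h) (P.head h)

def IsPathFromTo {α : Type} (A : α → α → Prop) (S T : α → Prop) (P : List α) : Prop :=
  ∃ h : P ≠ [], P.Nodup ∧ P.Chain' A ∧ S (P.head h) ∧ T (P.getLast h)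

def IsPathBtw {α : Type} (A : α → α → Prop) (s e : α) (P : List α) : Prop :=
  ∃ h : P ≠ [], P.Nodup ∧ P.Chain' A ∧ P.head h = s ∧ P.getLast h = e

noncomputable def cost {α : Type} (w : α → ℝ) (I : Finset α) (e : α) : ℝ :=
  if e ∈ I then w e else -w e

noncomputable def costOf {α : Type} (w : α → ℝ) (I : Finset α) (P : List α) : ℝ :=
  (P.map (cost w I)).sum

noncomputable def symmd {α : Type} (A B : Finset α) : Finset α := (A \ B) ∪ (B \ A)

namespace FinMatroid
variable {α : Type} (M : FinMatroid α)

lemma card_le_rank {A X : Finset α} (hX : X ⊆ A) (h : M.Indep X) : X.card ≤ M.rank A :=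
  Finset.le_sup (by simp [Finset.mem_filter, Finset.mem_powerset, hX, h])

lemma rank_le {A : Finset α} {n : ℕ} (h : ∀ X ⊆ A, M.Indep X → X.card ≤ n) :
    M.rank A ≤ n := by
  apply Finset.sup_le
  intro Y hY
  rw [Finset.mem_filter, Finset.mem_powerset] at hY
  exact h Y hY.1 hY.2

lemma exists_basis (A : Finset α) : ∃ B, B ⊆ A ∧ M.Indep B ∧ B.card = M.rank A := by
  obtain ⟨B, hB, heq⟩ := Finset.exists_mem_eq_sup (A.powerset.filter (fun Y => M.Indep Y))
    ⟨∅, by simp [M.empty_indep]⟩ Finset.card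
  rw [Finset.mem_filter, Finset.mem_powerset] at hB
  exact ⟨B, hB.1, hB.2, heq.symm⟩

lemma rank_indep {A : Finset α} (h : M.Indep A) : M.rank A = A.card :=
  le_antisymm (M.rank_le fun X hX _ => Finset.card_le_card hX) (M.card_le_rank (le_refl _) h)

lemma rank_mono {A B : Finset α} (h : A ⊆ B) : M.rank A ≤ M.rank B := by
  obtain ⟨C, hC1, hC2, hC3⟩ := M.exists_basis A
  rw [← hC3]; exact M.card_le_rank (hC1.trans h) hC2

lemma augment_to : ∀ (d : ℕ) (X Z : Finset α), M.Indep X → M.Indep Z →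
    Z.card - X.card = d → X.card ≤ Z.card →
    ∃ Y, M.Indep Y ∧ X ⊆ Y ∧ Y ⊆ X ∪ Z ∧ Y.card = Z.card := by
  intro d
  induction d with
  | zero => intro X Z hX _ hd hle
            exact ⟨X, hX, le_refl _, Finset.subset_union_left, le_antisymm hle (by omega)⟩
  | succ m ih =>
    intro X Z hX hZ hd hle
    obtain ⟨z, hz, hzi⟩ := M.exchange hX hZ (by omega)
    rw [Finset.mem_sdiff] at hz
    obtain ⟨Y, h1, h2, h3, h4⟩ := ih (insert z X) Z hzi hZ
      (by rw [Finset.card_insert_of_notMem hz.2]; omega)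
      (by rw [Finset.card_insert_of_notMem hz.2]; omega)
    refine ⟨Y, h1, (Finset.subset_insert _ _).trans h2, h3.trans ?_, h4⟩
    intro x hx
    rcases Finset.mem_union.1 hx with h | h
    · rcases Finset.mem_insert.1 h with h | h
      · exact Finset.mem_union_right _ (h ▸ hz.1)
      · exact Finset.mem_union_left _ h
    · exact Finset.mem_union_right _ h

def Sp (A : Finset α) (x : α) : Prop := M.rank (insert x A) = M.rank A

lemma sp_of_mem {A : Finset α} {x : α} (h : x ∈ A) : M.Sp A x := by
  unfold Sp; rw [Finset.insert_eq_self.2 h]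

lemma sp_of_dep {A : Finset α} {x : α} (hA : M.Indep A) (hdep : ¬ M.Indep (insert x A)) :
    M.Sp A x := by
  by_cases hx : x ∈ A
  · exact M.sp_of_mem hx
  unfold Sp
  rw [M.rank_indep hA]
  refine le_antisymm (M.rank_le ?_) (by rw [← M.rank_indep hA]; exact M.rank_mono (Finset.subset_insert _ _))
  intro X hX hXi
  by_contra hc
  push_neg at hc
  have hcard : (insert x A).card ≤ X.card := by
    rw [Finset.card_insert_of_notMem hx]; omega
  have : X = insert x A := Finset.eq_of_subset_of_card_le hX hcard
  exact hdep (this ▸ hXi)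

lemma not_sp {A : Finset α} {x : α} (hx : x ∉ A) (hi : M.Indep (insert x A)) :
    ¬ M.Sp A x := by
  unfold Sp
  have h1 : M.rank (insert x A) = A.card + 1 := by
    rw [M.rank_indep hi, Finset.card_insert_of_notMem hx]
  have h2 : M.rank A = A.card := M.rank_indep (M.subset_indep hi (Finset.subset_insert _ _))
  omega

lemma rank_union_eq {A X : Finset α} (h : ∀ x ∈ X, M.Sp A x) : M.rank (A ∪ X) = M.rank A := by
  refine le_antisymm ?_ (M.rank_mono Finset.subset_union_left)
  by_contra hc
  push_neg at hc
  obtain ⟨Z, hZ1, hZ2, hZ3⟩ := M.exists_basis (A ∪ X)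
  obtain ⟨B, hB1, hB2, hB3⟩ := M.exists_basis A
  obtain ⟨z, hz, hzi⟩ := M.exchange hB2 hZ2 (by omega)
  rw [Finset.mem_sdiff] at hz
  have hcard : (insert z B).card = M.rank A + 1 := by
    rw [Finset.card_insert_of_notMem hz.2, hB3]
  rcases Finset.mem_union.1 (hZ1 hz.1) with hA | hX
  · have := M.card_le_rank (Finset.insert_subset hA hB1) hzi
    omega
  · have := M.card_le_rank (Finset.insert_subset_insert z hB1) hzi
    have hsp := h z hX
    unfold Sp at hsp
    omega

lemma sp_mono {B B' : Finset α} {x : α} (hBB' : B ⊆ B') (h : M.Sp B x) : M.Sp B' x := by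
  by_cases hx : x ∈ B'
  · exact M.sp_of_mem hx
  unfold Sp
  refine le_antisymm ?_ (M.rank_mono (Finset.subset_insert _ _))
  by_contra hc
  push_neg at hc
  obtain ⟨Z, hZ1, hZ2, hZ3⟩ := M.exists_basis (insert x B')
  obtain ⟨B₀, hB01, hB02, hB03⟩ := M.exists_basis B
  have hcle : B₀.card ≤ Z.card := by
    have := M.rank_mono hBB'
    omega
  obtain ⟨Y, hY1, hY2, hY3, hY4⟩ := M.augment_to (Z.card - B₀.card) B₀ Z hB02 hZ2 rfl hcle
  by_cases hxY : x ∈ Y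
  · have hin : insert x B₀ ⊆ Y := Finset.insert_subset hxY hY2
    have hxB0 : x ∉ B₀ := fun hh => hx (hBB' (hB01 hh))
    have := M.card_le_rank (Finset.insert_subset_insert x hB01) (M.subset_indep hY1 hin)
    rw [Finset.card_insert_of_notMem hxB0] at this
    unfold Sp at h
    omega
  · have hYB' : Y ⊆ B' := by
      intro y hy
      rcases Finset.mem_union.1 (hY3 hy) with h1 | h1
      · exact hBB' (hB01 h1)
      · rcases Finset.mem_insert.1 (hZ1 h1) with h2 | h2
        · exact absurd (h2 ▸ hy) hxY
        · exact h2
    have := M.card_le_rank hYB' hY1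
    omega

lemma exists_circuit : ∀ (n : ℕ) (J : Finset α), J.card ≤ n → ¬ M.Indep J →
    ∃ C, C ⊆ J ∧ ¬ M.Indep C ∧ ∀ x ∈ C, M.Indep (C.erase x) := by
  intro n
  induction n with
  | zero => intro J hJ hdep
            interval_cases h : J.card
            · rw [Finset.card_eq_zero.1 h] at hdep
              exact absurd M.empty_indep hdep
  | succ m ih =>
    intro J hJ hdep
    by_cases h : ∀ x ∈ J, M.Indep (J.erase x)
    · exact ⟨J, le_refl _, hdep, h⟩
    · push_neg at h
      obtain ⟨x, hx, hxd⟩ := h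
      obtain ⟨C, hC1, hC2, hC3⟩ := ih (J.erase x) (by rw [Finset.card_erase_of_mem hx]; omega) hxd
      exact ⟨C, hC1.trans (Finset.erase_subset _ _), hC2, hC3⟩

/-- the key span-contradiction lemma -/
lemma key {A C : Finset α} {x : α} (hA : M.Indep A) (hxA : x ∉ A)
    (hxiA : M.Indep (insert x A)) (hC : ¬ M.Indep C)
    (hCmin : ∀ e ∈ C, M.Indep (C.erase e)) (hxC : x ∈ C)
    (hrest : ∀ c ∈ C.erase x, M.Sp A c) : False := by
  have hspCx : M.Sp (C.erase x) x := by
    apply M.sp_of_dep (hCmin x hxC)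
    rw [Finset.insert_erase hxC]; exact hC
  have hsp2 : M.Sp (A ∪ C.erase x) x := M.sp_mono Finset.subset_union_right hspCx
  have h1 : M.rank (A ∪ C.erase x) = M.rank A := M.rank_union_eq hrest
  have h2 : M.rank (insert x A) = A.card + 1 := by
    rw [M.rank_indep hxiA, Finset.card_insert_of_notMem hxA]
  have h3 : M.rank (insert x A) ≤ M.rank (insert x (A ∪ C.erase x)) :=
    M.rank_mono (Finset.insert_subset_insert x Finset.subset_union_left)
  have h4 : M.rank A = A.card := M.rank_indep hA
  unfold Sp at hsp2
  omega

end FinMatroid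


noncomputable def Wsum {n : ℕ} (h : ZMod n → ℝ) (a : ZMod n) (L : ℕ) : ℝ :=
  ∑ k ∈ Finset.range L, h (a + (k : ZMod n))

lemma Wsum_add {n : ℕ} (h : ZMod n → ℝ) (a : ZMod n) (L1 L2 : ℕ) :
    Wsum h a (L1 + L2) = Wsum h a L1 + Wsum h (a + (L1 : ZMod n)) L2 := by
  unfold Wsum
  rw [Finset.sum_range_add]
  congr 1
  apply Finset.sum_congr rfl
  intro k _
  congr 1
  push_cast
  ring

lemma Wsum_partial {n : ℕ} (h : ZMod n → ℝ) (σ : ℕ → ZMod n) (δ : ℕ → ℕ) (r : ℕ)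
    (hch : ∀ t < r, σ (t + 1) = σ t + (δ t : ZMod n)) :
    (∀ t ≤ r, σ t = σ 0 + ((∑ i ∈ Finset.range t, δ i : ℕ) : ZMod n)) := by
  intro t
  induction t with
  | zero => simp
  | succ m ih =>
    intro hm
    rw [hch m (by omega), ih (by omega), Finset.sum_range_succ]
    push_cast
    ring

lemma Wsum_chain {n : ℕ} (h : ZMod n → ℝ) (σ : ℕ → ZMod n) (δ : ℕ → ℕ) :
    ∀ (r : ℕ), (∀ t < r, σ (t + 1) = σ t + (δ t : ZMod n)) →
    (∑ t ∈ Finset.range r, Wsum h (σ t) (δ t)) = Wsum h (σ 0) (∑ t ∈ Finset.range r, δ t) := by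
  intro r
  induction r with
  | zero => simp [Wsum]
  | succ m ih =>
    intro hch
    rw [Finset.sum_range_succ, Finset.sum_range_succ, ih (fun t ht => hch t (by omega)),
      Wsum_add]
    congr 1
    rw [← Wsum_partial h σ δ (m + 1) hch m (by omega)]

lemma Wsum_full {n : ℕ} [NeZero n] (hn : 0 < n) (h : ZMod n → ℝ) (a : ZMod n) :
    Wsum h a n = ∑ v : ZMod n, h v := by
  unfold Wsum
  apply Finset.sum_bij (fun (k : ℕ) (_ : k ∈ Finset.range n) => a + (k : ZMod n))
  · intro k _; exact Finset.mem_univ _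
  · intro k1 hk1 k2 hk2 heq
    have h1 : ((k1 : ZMod n)) = (k2 : ZMod n) := by
      have := add_left_cancel heq
      exact this
    have e1 := ZMod.val_cast_of_lt (Finset.mem_range.1 hk1)
    have e2 := ZMod.val_cast_of_lt (Finset.mem_range.1 hk2)
    rw [← e1, ← e2, h1]
  · intro v _
    refine ⟨(v - a).val, Finset.mem_range.2 (ZMod.val_lt _), ?_⟩
    rw [ZMod.natCast_val, ZMod.cast_id]
    ring
  · intro k _; rfl

lemma Wsum_mul {n : ℕ} [NeZero n] (hn : 0 < n) (h : ZMod n → ℝ) (a : ZMod n) (m : ℕ) :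
    Wsum h a (m * n) = m * ∑ v : ZMod n, h v := by
  induction m with
  | zero => simp [Wsum]
  | succ p ih =>
    have : (p + 1) * n = p * n + n := by ring
    rw [this, Wsum_add, ih, Wsum_full hn h]
    · push_cast; ring

lemma winding_contra {n : ℕ} [NeZero n] (hn : 0 < n) (h : ZMod n → ℝ)
    (hneg : ∑ v : ZMod n, h v < 0) (r : ℕ) (hr : 0 < r) (σ : ℕ → ZMod n) (δ : ℕ → ℕ)
    (hch : ∀ t < r, σ (t + 1) = σ t + (δ t : ZMod n))
    (hcl : σ r = σ 0)
    (hpos : ∀ t < r, 0 < δ t)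
    (hnn : ∀ t < r, 0 ≤ Wsum h (σ t) (δ t)) : False := by
  set L := ∑ t ∈ Finset.range r, δ t with hL
  have hLpos : 0 < L := by
    have : δ 0 ≤ L := Finset.single_le_sum (fun t _ => Nat.zero_le _) (Finset.mem_range.2 hr)
    have := hpos 0 hr
    omega
  have hdvd : n ∣ L := by
    have h0 := Wsum_partial h σ δ r hch r (le_refl _)
    rw [hcl] at h0
    have : ((L : ℕ) : ZMod n) = 0 := by
      have := h0.symm
      rw [left_eq_add] at h0
      exact h0
    exact (ZMod.natCast_eq_zero_iff L n).1 this
  obtain ⟨m, hm⟩ := hdvd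
  have hm1 : 1 ≤ m := by
    rcases Nat.eq_zero_or_pos m with h0 | h0
    · subst h0; simp at hm; omega
    · omega
  have htot : (∑ t ∈ Finset.range r, Wsum h (σ t) (δ t)) = Wsum h (σ 0) L :=
    Wsum_chain h σ δ r hch
  have hge : (0:ℝ) ≤ ∑ t ∈ Finset.range r, Wsum h (σ t) (δ t) :=
    Finset.sum_nonneg (fun t ht => hnn t (Finset.mem_range.1 ht))
  rw [htot, hm, Nat.mul_comm, Wsum_mul hn] at hge
  have : (m : ℝ) * ∑ v : ZMod n, h v < 0 := by
    apply mul_neg_of_pos_of_neg _ hneg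
    exact_mod_cast hm1
  linarith


section NNC
variable {α : Type} [Fintype α]

lemma zmod_cast_val {n : ℕ} [NeZero n] (x : ZMod n) : ((x.val : ℕ) : ZMod n) = x := by
  rw [ZMod.natCast_val, ZMod.cast_id]

lemma zmod_sum_range {d : ℕ} [NeZero d] (F : ℕ → ℝ) :
    ∑ k : ZMod d, F k.val = ∑ j ∈ Finset.range d, F j := by
  apply Finset.sum_bij (fun (k : ZMod d) (_ : k ∈ Finset.univ) => k.val)
  · intro k _; exact Finset.mem_range.2 (ZMod.val_lt k)
  · intro k1 _ k2 _ h
    rw [← zmod_cast_val k1, ← zmod_cast_val k2, h]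
  · intro j hj
    exact ⟨(j : ZMod d), Finset.mem_univ _, ZMod.val_cast_of_lt (Finset.mem_range.1 hj)⟩
  · intro k _; rfl

theorem nnc (M1 M2 : FinMatroid α) (w : α → ℝ) (I : Finset α)
    (hI1 : M1.Indep I) (hI2 : M2.Indep I)
    (hmaxI : ∀ J : Finset α, M1.Indep J → M2.Indep J → J.card = I.card → J.sum w ≤ I.sum w) :
    ∀ n : ℕ, 0 < n → ∀ f : ZMod n → α, Function.Injective f →
      (∀ i, DArcs M1 M2 I (f i) (f (i + 1))) →
      0 ≤ ∑ j ∈ Finset.range n, cost w I (f ((j : ℕ) : ZMod n)) := by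
  intro n
  induction n using Nat.strong_induction_on with
  | _ n IH =>
  intro hn f hinj harc
  haveI : NeZero n := ⟨hn.ne'⟩
  by_contra hcon
  push_neg at hcon
  have hcon' : ∑ i : ZMod n, cost w I (f i) < 0 := by
    have e := zmod_sum_range (fun j => cost w I (f ((j : ℕ) : ZMod n))) (d := n)
    have e2 : ∀ k : ZMod n, cost w I (f ((k.val : ℕ) : ZMod n)) = cost w I (f k) := by
      intro k; rw [zmod_cast_val]
    rw [Finset.sum_congr rfl (fun k _ => e2 k)] at e
    rw [e]
    exact hcon
  have hA1 : ∀ i : ZMod n, f (i + 1) ∉ I →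
      f i ∈ I ∧ M1.Indep (insert (f (i + 1)) (I.erase (f i))) := by
    intro i hi
    rcases harc i with h | h
    · exact ⟨h.1, h.2.2⟩
    · exact absurd h.2.1 hi
  have hA2 : ∀ i : ZMod n, f i ∉ I →
      f (i + 1) ∈ I ∧ M2.Indep (insert (f i) (I.erase (f (i + 1)))) := by
    intro i hi
    rcases harc i with h | h
    · exact absurd h.1 hi
    · exact ⟨h.2.1, h.2.2⟩
  have subcyc : ∀ (a : ZMod n) (d : ℕ), 0 < d → d < n →
      DArcs M1 M2 I (f (a + ((d - 1 : ℕ) : ZMod n))) (f a) →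
      0 ≤ Wsum (fun v => cost w I (f v)) a d := by
    intro a d hd1 hd2 hch
    haveI : NeZero d := ⟨hd1.ne'⟩
    have harc' : ∀ k : ZMod d, DArcs M1 M2 I (f (a + ((k.val : ℕ) : ZMod n)))
        (f (a + (((k + 1).val : ℕ) : ZMod n))) := by
      intro k
      by_cases hk : k.val + 1 < d
      · have e1 : (k + 1).val = k.val + 1 := by
          have h1 := ZMod.val_add k 1
          have h2 : (1 : ZMod d).val = 1 % d := ZMod.val_one_eq_one_mod d
          have hd2' : 1 < d := by omega
          rw [h2, Nat.mod_eq_of_lt hd2'] at h1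
          rw [h1, Nat.mod_eq_of_lt hk]
        rw [e1]
        have e3 : a + ((k.val + 1 : ℕ) : ZMod n) = (a + ((k.val : ℕ) : ZMod n)) + 1 := by
          push_cast; ring
        rw [e3]
        exact harc _
      · have hk2 : k.val = d - 1 := by have := ZMod.val_lt k; omega
        have e0 : (k + 1) = (0 : ZMod d) := by
          rw [← zmod_cast_val k, hk2, ← Nat.cast_add_one, Nat.sub_add_cancel hd1,
            ZMod.natCast_self]
        rw [e0, hk2]
        simpa using hch
    have hinj' : Function.Injective (fun k : ZMod d => f (a + ((k.val : ℕ) : ZMod n))) := by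
      intro k1 k2 h
      have h2 := hinj h
      have h3 := add_left_cancel h2
      have h4 : k1.val = k2.val := by
        have e1 : (((k1.val : ℕ) : ZMod n)).val = k1.val :=
          ZMod.val_cast_of_lt (by have := ZMod.val_lt k1; omega)
        have e2 : (((k2.val : ℕ) : ZMod n)).val = k2.val :=
          ZMod.val_cast_of_lt (by have := ZMod.val_lt k2; omega)
        rw [← e1, ← e2, h3]
      rw [← zmod_cast_val k1, ← zmod_cast_val k2, h4]
    have key := IH d hd2 hd1 _ hinj' harc'
    unfold Wsum
    refine le_trans key (le_of_eq (Finset.sum_congr rfl ?_))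
    intro j hj
    rw [ZMod.val_cast_of_lt (Finset.mem_range.1 hj)]
  classical
  set c : ZMod n → ℝ := fun v => cost w I (f v) with hc
  set Tin : Finset (ZMod n) := Finset.univ.filter (fun i => f i ∈ I) with hTin
  set Tout : Finset (ZMod n) := Finset.univ.filter (fun i => f i ∉ I) with hTout
  set NN : Finset α := Tin.image f with hNN
  set OO : Finset α := Tout.image f with hOO
  set J : Finset α := (I \ NN) ∪ OO with hJ
  have hNNI : NN ⊆ I := by
    intro x hx
    obtain ⟨i, hi, rfl⟩ := Finset.mem_image.1 hx
    exact (Finset.mem_filter.1 hi).2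
  have hOOI : ∀ x ∈ OO, x ∉ I := by
    intro x hx
    obtain ⟨i, hi, rfl⟩ := Finset.mem_image.1 hx
    exact (Finset.mem_filter.1 hi).2
  have hJmem : ∀ x ∈ J, (x ∈ I ∧ x ∉ NN) ∨ (x ∉ I ∧ x ∈ OO) := by
    intro x hx
    rcases Finset.mem_union.1 hx with h | h
    · exact Or.inl ⟨(Finset.mem_sdiff.1 h).1, (Finset.mem_sdiff.1 h).2⟩
    · exact Or.inr ⟨hOOI x h, h⟩
  have hNN_notJ : ∀ x ∈ NN, x ∉ J := by
    intro x hx hxJ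
    rcases hJmem x hxJ with h | h
    · exact h.2 hx
    · exact h.1 (hNNI hx)
  have hcards : Tin.card = Tout.card := by
    apply Finset.card_bij (fun i (_ : i ∈ Tin) => i + 1)
    · intro i hi
      have hiI : f i ∈ I := (Finset.mem_filter.1 hi).2
      rw [hTout, Finset.mem_filter]
      refine ⟨Finset.mem_univ _, ?_⟩
      rcases harc i with h | h
      · exact h.2.1
      · exact absurd hiI h.1
    · intro i1 _ i2 _ h; exact add_right_cancel h
    · intro j hj
      have hjI : f j ∉ I := (Finset.mem_filter.1 hj).2
      have e : j - 1 + 1 = j := sub_add_cancel j 1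
      refine ⟨j - 1, ?_, e⟩
      rw [hTin, Finset.mem_filter]
      refine ⟨Finset.mem_univ _, ?_⟩
      exact (hA1 (j - 1) (by rw [e]; exact hjI)).1
  have hNNcard : NN.card = Tin.card := Finset.card_image_of_injective _ hinj
  have hOOcard : OO.card = Tout.card := Finset.card_image_of_injective _ hinj
  have hdisj : Disjoint (I \ NN) OO := by
    rw [Finset.disjoint_left]
    intro x hx hxO
    exact hOOI x hxO (Finset.mem_sdiff.1 hx).1
  have hJcard : J.card = I.card := by
    rw [hJ, Finset.card_union_of_disjoint hdisj, Finset.card_sdiff_of_subset hNNI, hNNcard, hOOcard,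
      hcards]
    have hle : Tout.card ≤ I.card := by
      rw [← hcards, ← hNNcard]
      exact Finset.card_le_card hNNI
    omega
  -- membership helpers for circuits
  have hidx_of : ∀ (C : Finset α), C ⊆ J → ∀ x ∈ C, x ∉ I → ∃ i : ZMod n, f i = x := by
    intro C hCJ x hxC hxI
    rcases hJmem x (hCJ hxC) with h | h
    · exact absurd h.1 hxI
    · obtain ⟨i, _, rfl⟩ := Finset.mem_image.1 h.2
      exact ⟨i, rfl⟩

  have hsumJ : ∑ x ∈ J, w x = (∑ x ∈ I \ NN, w x) + ∑ x ∈ OO, w x := Finset.sum_union hdisj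
  have hsumI : (∑ x ∈ I \ NN, w x) + ∑ x ∈ NN, w x = ∑ x ∈ I, w x := Finset.sum_sdiff hNNI
  have hsumNN : ∑ x ∈ NN, w x = ∑ i ∈ Tin, w (f i) :=
    Finset.sum_image (fun x _ y _ h => hinj h)
  have hsumOO : ∑ x ∈ OO, w x = ∑ i ∈ Tout, w (f i) :=
    Finset.sum_image (fun x _ y _ h => hinj h)
  have hcyc : ∑ i : ZMod n, cost w I (f i)
      = (∑ i ∈ Tin, w (f i)) - ∑ i ∈ Tout, w (f i) := by
    have h0 : ∑ i ∈ Tin, cost w I (f i) + ∑ i ∈ Tout, cost w I (f i)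
        = ∑ i : ZMod n, cost w I (f i) := by
      rw [hTin, hTout]
      exact Finset.sum_filter_add_sum_filter_not Finset.univ (fun i => f i ∈ I) _
    have h1 : ∑ i ∈ Tin, cost w I (f i) = ∑ i ∈ Tin, w (f i) := by
      apply Finset.sum_congr rfl
      intro i hi
      simp only [cost, if_pos (Finset.mem_filter.1 hi).2]
    have h2 : ∑ i ∈ Tout, cost w I (f i) = -∑ i ∈ Tout, w (f i) := by
      rw [← Finset.sum_neg_distrib]
      apply Finset.sum_congr rfl
      intro i hi
      simp only [cost, if_neg (Finset.mem_filter.1 hi).2]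
    rw [h1, h2] at h0
    linarith
  -- shared orbit machinery
  have orbit_cycle : ∀ (g : ZMod n → ZMod n) (idx : Finset (ZMod n)) (i₀ : ZMod n),
      i₀ ∈ idx → (∀ i ∈ idx, g i ∈ idx ∧ g i ≠ i) →
      ∃ (p : ℕ → ZMod n) (r : ℕ), 0 < r ∧ p r = p 0 ∧ (∀ t, p t ∈ idx) ∧
        (∀ t, p (t + 1) = g (p t)) := by
    intro g idx i₀ h0 hg
    have horb : ∀ t : ℕ, g^[t] i₀ ∈ idx := by
      intro t
      induction t with
      | zero => simpa using h0
      | succ m ihm => rw [Function.iterate_succ_apply']; exact (hg _ ihm).1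
    have hexab : ∃ a b : ℕ, a < b ∧ g^[a] i₀ = g^[b] i₀ := by
      obtain ⟨x, y, hxy, heq⟩ := Fintype.exists_ne_map_eq_of_card_lt
        (fun t : Fin (n + 1) => g^[t.val] i₀) (by rw [ZMod.card, Fintype.card_fin]; omega)
      rcases lt_trichotomy x.val y.val with h | h | h
      · exact ⟨x.val, y.val, h, heq⟩
      · exact absurd (Fin.ext h) hxy
      · exact ⟨y.val, x.val, h, heq.symm⟩
    obtain ⟨a, b, hab, hab2⟩ := hexab
    refine ⟨fun t => g^[t] (g^[a] i₀), b - a, by omega, ?_, ?_, ?_⟩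
    · show g^[b - a] (g^[a] i₀) = g^[0] (g^[a] i₀)
      rw [Function.iterate_zero_apply, ← Function.iterate_add_apply]
      have e : b - a + a = b := by omega
      rw [e, ← hab2]
    · intro t
      show g^[t] (g^[a] i₀) ∈ idx
      rw [← Function.iterate_add_apply]
      exact horb (t + a)
    · intro t
      exact Function.iterate_succ_apply' g t _
  have hJ1 : M1.Indep J := by
    by_contra hdep
    obtain ⟨C, hCJ, hCdep, hCmin⟩ := M1.exists_circuit J.card J (le_refl _) hdep
    set idx : Finset (ZMod n) := Finset.univ.filter (fun i => f i ∈ C ∧ f i ∉ I) with hidx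
    have hidx_mem : ∀ i ∈ idx, f i ∈ C ∧ f i ∉ I := fun i hi => (Finset.mem_filter.1 hi).2
    have hidx_of2 : ∀ x ∈ C, x ∉ I → ∃ i ∈ idx, f i = x := by
      intro x hxC hxI
      obtain ⟨i, rfl⟩ := hidx_of C hCJ x hxC hxI
      exact ⟨i, Finset.mem_filter.2 ⟨Finset.mem_univ _, hxC, hxI⟩, rfl⟩
    have hidx_ne : ∃ i, i ∈ idx := by
      have hex : ∃ x ∈ C, x ∉ I := by
        by_contra hcc
        push_neg at hcc
        exact hCdep (M1.subset_indep hI1 hcc)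
      obtain ⟨x, h1, h2⟩ := hex
      obtain ⟨i, hi, _⟩ := hidx_of2 x h1 h2
      exact ⟨i, hi⟩
    have hpred : ∀ i ∈ idx, f (i - 1) ∈ I ∧ M1.Indep (insert (f i) (I.erase (f (i - 1)))) := by
      intro i hi
      have e : i - 1 + 1 = i := sub_add_cancel i 1
      have h := hA1 (i - 1) (by rw [e]; exact (hidx_mem i hi).2)
      rw [e] at h
      exact h
    have hpred_notC : ∀ i ∈ idx, f (i - 1) ∉ C := by
      intro i hi hcc
      refine hNN_notJ (f (i - 1)) ?_ (hCJ hcc)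
      exact Finset.mem_image.2 ⟨i - 1,
        Finset.mem_filter.2 ⟨Finset.mem_univ _, (hpred i hi).1⟩, rfl⟩
    by_cases hjump : ∀ i ∈ idx, ∃ j, j ∈ idx ∧ j ≠ i ∧
        M1.Indep (insert (f j) (I.erase (f (i - 1))))
    · obtain ⟨i₀, hi₀⟩ := hidx_ne
      set g : ZMod n → ZMod n := fun i =>
        if h : ∃ j, j ∈ idx ∧ j ≠ i ∧ M1.Indep (insert (f j) (I.erase (f (i - 1)))) then
          h.choose else i with hgdef
      have hg : ∀ i ∈ idx, g i ∈ idx ∧ g i ≠ i ∧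
          M1.Indep (insert (f (g i)) (I.erase (f (i - 1)))) := by
        intro i hi
        have hex := hjump i hi
        rw [hgdef]
        simp only [dif_pos hex]
        exact hex.choose_spec
      obtain ⟨p, r, hr0, hpr, hpidx, hpsucc⟩ := orbit_cycle g idx i₀ hi₀
        (fun i hi => ⟨(hg i hi).1, (hg i hi).2.1⟩)
      have hpne : ∀ t, p (t + 1) ≠ p t := fun t => by
        rw [hpsucc t]; exact (hg (p t) (hpidx t)).2.1
      refine winding_contra hn (fun v => cost w I (f v)) hcon' r hr0 (fun t => p (r - t))
        (fun t => (p (r - 1 - t) - p (r - t)).val) ?_ ?_ ?_ ?_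
      · intro t ht
        show p (r - (t + 1)) = p (r - t) + (((p (r - 1 - t) - p (r - t)).val : ℕ) : ZMod n)
        have e1 : r - (t + 1) = r - 1 - t := by omega
        rw [e1, zmod_cast_val]
        ring
      · show p (r - r) = p (r - 0)
        rw [Nat.sub_self, Nat.sub_zero, hpr]
      · intro t ht
        show 0 < (p (r - 1 - t) - p (r - t)).val
        have e2 : r - t = (r - 1 - t) + 1 := by omega
        have h3 : p (r - 1 - t) - p (r - t) ≠ 0 := by
          rw [e2, sub_ne_zero]
          exact (hpne _).symm
        exact Nat.pos_of_ne_zero (fun h0 => h3 ((ZMod.val_eq_zero _).1 h0))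
      · intro t ht
        show 0 ≤ Wsum (fun v => cost w I (f v)) (p (r - t)) ((p (r - 1 - t) - p (r - t)).val)
        have e2 : r - t = (r - 1 - t) + 1 := by omega
        have h3 : p (r - 1 - t) - p (r - t) ≠ 0 := by
          rw [e2, sub_ne_zero]; exact (hpne _).symm
        have hd1 : 0 < (p (r - 1 - t) - p (r - t)).val :=
          Nat.pos_of_ne_zero (fun h0 => h3 ((ZMod.val_eq_zero _).1 h0))
        apply subcyc _ _ hd1 (ZMod.val_lt _)
        have echord : p (r - t) + ((((p (r - 1 - t) - p (r - t)).val - 1 : ℕ)) : ZMod n)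
            = p (r - 1 - t) - 1 := by
          rw [Nat.cast_sub (by omega), zmod_cast_val, Nat.cast_one]
          ring
        rw [echord]
        have e4 : p (r - t) = g (p (r - 1 - t)) := by rw [e2, hpsucc]
        refine Or.inl ⟨(hpred (p (r - 1 - t)) (hpidx _)).1, ?_, ?_⟩
        · rw [e4]; exact (hidx_mem _ (hg _ (hpidx _)).1).2
        · rw [e4]; exact (hg _ (hpidx _)).2.2
    · push_neg at hjump
      obtain ⟨i, hi, hno⟩ := hjump
      refine M1.key (A := I.erase (f (i - 1))) (x := f i) (C := C)
        (M1.subset_indep hI1 (Finset.erase_subset _ _)) ?_ (hpred i hi).2 hCdep hCmin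
        (hidx_mem i hi).1 ?_
      · intro hmem
        exact (hidx_mem i hi).2 (Finset.mem_of_mem_erase hmem)
      · intro cc hcc
        have hccC : cc ∈ C := Finset.mem_of_mem_erase hcc
        have hccne : cc ≠ f i := (Finset.mem_erase.1 hcc).1
        by_cases hccI : cc ∈ I
        · apply M1.sp_of_mem
          refine Finset.mem_erase.2 ⟨?_, hccI⟩
          intro h0
          exact hpred_notC i hi (h0 ▸ hccC)
        · obtain ⟨j, hj, hfj⟩ := hidx_of2 cc hccC hccI
          have hjne : j ≠ i := fun h0 => hccne (by rw [← hfj, h0])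
          have hd := hno j hj hjne
          rw [hfj] at hd
          exact M1.sp_of_dep (M1.subset_indep hI1 (Finset.erase_subset _ _)) hd
  have hJ2 : M2.Indep J := by
    by_contra hdep
    obtain ⟨C, hCJ, hCdep, hCmin⟩ := M2.exists_circuit J.card J (le_refl _) hdep
    set idx : Finset (ZMod n) := Finset.univ.filter (fun i => f i ∈ C ∧ f i ∉ I) with hidx
    have hidx_mem : ∀ i ∈ idx, f i ∈ C ∧ f i ∉ I := fun i hi => (Finset.mem_filter.1 hi).2
    have hidx_of2 : ∀ x ∈ C, x ∉ I → ∃ i ∈ idx, f i = x := by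
      intro x hxC hxI
      obtain ⟨i, rfl⟩ := hidx_of C hCJ x hxC hxI
      exact ⟨i, Finset.mem_filter.2 ⟨Finset.mem_univ _, hxC, hxI⟩, rfl⟩
    have hidx_ne : ∃ i, i ∈ idx := by
      have hex : ∃ x ∈ C, x ∉ I := by
        by_contra hcc
        push_neg at hcc
        exact hCdep (M2.subset_indep hI2 hcc)
      obtain ⟨x, h1, h2⟩ := hex
      obtain ⟨i, hi, _⟩ := hidx_of2 x h1 h2
      exact ⟨i, hi⟩
    have hsucc : ∀ i ∈ idx, f (i + 1) ∈ I ∧ M2.Indep (insert (f i) (I.erase (f (i + 1)))) :=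
      fun i hi => hA2 i (hidx_mem i hi).2
    have hsucc_notC : ∀ i ∈ idx, f (i + 1) ∉ C := by
      intro i hi hcc
      refine hNN_notJ (f (i + 1)) ?_ (hCJ hcc)
      exact Finset.mem_image.2 ⟨i + 1,
        Finset.mem_filter.2 ⟨Finset.mem_univ _, (hsucc i hi).1⟩, rfl⟩
    by_cases hjump : ∀ i ∈ idx, ∃ j, j ∈ idx ∧ j ≠ i ∧
        M2.Indep (insert (f j) (I.erase (f (i + 1))))
    · obtain ⟨i₀, hi₀⟩ := hidx_ne
      set g : ZMod n → ZMod n := fun i =>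
        if h : ∃ j, j ∈ idx ∧ j ≠ i ∧ M2.Indep (insert (f j) (I.erase (f (i + 1)))) then
          h.choose else i with hgdef
      have hg : ∀ i ∈ idx, g i ∈ idx ∧ g i ≠ i ∧
          M2.Indep (insert (f (g i)) (I.erase (f (i + 1)))) := by
        intro i hi
        have hex := hjump i hi
        rw [hgdef]
        simp only [dif_pos hex]
        exact hex.choose_spec
      obtain ⟨p, r, hr0, hpr, hpidx, hpsucc⟩ := orbit_cycle g idx i₀ hi₀
        (fun i hi => ⟨(hg i hi).1, (hg i hi).2.1⟩)
      have hpne : ∀ t, p (t + 1) ≠ p t := fun t => by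
        rw [hpsucc t]; exact (hg (p t) (hpidx t)).2.1
      refine winding_contra hn (fun v => cost w I (f v)) hcon' r hr0 (fun t => p t + 1)
        (fun t => (p (t + 1) - p t).val) ?_ ?_ ?_ ?_
      · intro t ht
        show p (t + 1) + 1 = (p t + 1) + (((p (t + 1) - p t).val : ℕ) : ZMod n)
        rw [zmod_cast_val]
        ring
      · show p r + 1 = p 0 + 1
        rw [hpr]
      · intro t ht
        show 0 < (p (t + 1) - p t).val
        have h3 : p (t + 1) - p t ≠ 0 := sub_ne_zero.2 (hpne t)
        exact Nat.pos_of_ne_zero (fun h0 => h3 ((ZMod.val_eq_zero _).1 h0))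
      · intro t ht
        show 0 ≤ Wsum (fun v => cost w I (f v)) (p t + 1) ((p (t + 1) - p t).val)
        have h3 : p (t + 1) - p t ≠ 0 := sub_ne_zero.2 (hpne t)
        have hd1 : 0 < (p (t + 1) - p t).val :=
          Nat.pos_of_ne_zero (fun h0 => h3 ((ZMod.val_eq_zero _).1 h0))
        apply subcyc _ _ hd1 (ZMod.val_lt _)
        have echord : (p t + 1) + ((((p (t + 1) - p t).val - 1 : ℕ)) : ZMod n)
            = p (t + 1) := by
          rw [Nat.cast_sub (by omega), zmod_cast_val, Nat.cast_one]
          ring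
        rw [echord]
        refine Or.inr ⟨?_, (hsucc (p t) (hpidx t)).1, ?_⟩
        · exact (hidx_mem _ (hpidx (t + 1))).2
        · have h5 := (hg (p t) (hpidx t)).2.2
          rw [← hpsucc t] at h5
          exact h5
    · push_neg at hjump
      obtain ⟨i, hi, hno⟩ := hjump
      refine M2.key (A := I.erase (f (i + 1))) (x := f i) (C := C)
        (M2.subset_indep hI2 (Finset.erase_subset _ _)) ?_ (hsucc i hi).2 hCdep hCmin
        (hidx_mem i hi).1 ?_
      · intro hmem
        exact (hidx_mem i hi).2 (Finset.mem_of_mem_erase hmem)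
      · intro cc hcc
        have hccC : cc ∈ C := Finset.mem_of_mem_erase hcc
        have hccne : cc ≠ f i := (Finset.mem_erase.1 hcc).1
        by_cases hccI : cc ∈ I
        · apply M2.sp_of_mem
          refine Finset.mem_erase.2 ⟨?_, hccI⟩
          intro h0
          exact hsucc_notC i hi (h0 ▸ hccC)
        · obtain ⟨j, hj, hfj⟩ := hidx_of2 cc hccC hccI
          have hjne : j ≠ i := fun h0 => hccne (by rw [← hfj, h0])
          have hd := hno j hj hjne
          rw [hfj] at hd
          exact M2.sp_of_dep (M2.subset_indep hI2 (Finset.erase_subset _ _)) hd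
  have hw := hmaxI J hJ1 hJ2 (by rw [hJcard])
  have : (0:ℝ) < 0 := by
    have e1 : ∑ x ∈ J, w x = ∑ x ∈ I, w x - ∑ i : ZMod n, cost w I (f i) := by
      rw [hsumJ, hcyc]
      linarith [hsumI, hsumNN, hsumOO]
    have e2 : J.sum w = ∑ x ∈ J, w x := rfl
    have e3 : I.sum w = ∑ x ∈ I, w x := rfl
    rw [e2, e3, e1] at hw
    linarith
  exact absurd this (lt_irrefl 0)

end NNC


section Main
variable {α : Type} [Fintype α]

lemma list_map_sum_eq (g : α → ℝ) (l : List α) (d : α) :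
    (l.map g).sum = ∑ j ∈ Finset.range l.length, g (l.getD j d) := by
  induction l with
  | nil => simp
  | cons a t ih =>
    simp only [List.map_cons, List.sum_cons, List.length_cons]
    rw [Finset.sum_range_succ']
    simp only [List.getD_cons_succ, List.getD_cons_zero]
    rw [ih]
    ring

lemma cycle_list_nonneg (M1 M2 : FinMatroid α) (w : α → ℝ)
    (I : Finset α) (hI1 : M1.Indep I) (hI2 : M2.Indep I)
    (hmaxI : ∀ J : Finset α, M1.Indep J → M2.Indep J → J.card = I.card → J.sum w ≤ I.sum w)
    (l : List α) (hne : l ≠ []) (hnd : l.Nodup) (hch : l.Chain' (DArcs M1 M2 I))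
    (hcl : DArcs M1 M2 I (l.getLast hne) (l.head hne)) : 0 ≤ costOf w I l := by
  have hn0 : 0 < l.length := List.length_pos_iff.2 hne
  set n := l.length with hn
  haveI : NeZero n := ⟨hn0.ne'⟩
  set d : α := l.head hne with hd
  set f : ZMod n → α := fun j => l.getD j.val d with hf
  have hgetD : ∀ m : ℕ, (hm : m < n) → l.getD m d = l.get ⟨m, hm⟩ :=
    fun m hm => List.getD_eq_get (l := l) (d := d) ⟨m, hm⟩
  have hinj : Function.Injective f := by
    intro a b hab
    simp only [hf] at hab
    rw [hgetD a.val (ZMod.val_lt a), hgetD b.val (ZMod.val_lt b)] at hab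
    have h2 := List.nodup_iff_injective_get.1 hnd hab
    have h3 : a.val = b.val := by
      have := congrArg Fin.val h2
      simpa using this
    exact ZMod.val_injective n h3
  have harc : ∀ i : ZMod n, DArcs M1 M2 I (f i) (f (i + 1)) := by
    intro i
    by_cases hk : i.val + 1 < n
    · have e1 : (i + 1).val = i.val + 1 := by
        have h1 := ZMod.val_add i 1
        have h2 : (1 : ZMod n).val = 1 % n := ZMod.val_one_eq_one_mod n
        have hn2 : 1 < n := by omega
        rw [h2, Nat.mod_eq_of_lt hn2] at h1
        rw [h1, Nat.mod_eq_of_lt hk]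
      have harc' := List.isChain_iff_getElem.1 hch i.val (by omega)
      simp only [hf]
      rw [hgetD i.val (ZMod.val_lt i), e1, hgetD (i.val + 1) hk]
      exact harc'
    · have hk2 : i.val = n - 1 := by have := ZMod.val_lt i; omega
      have e0 : i + 1 = (0 : ZMod n) := by
        rw [← zmod_cast_val i, hk2, ← Nat.cast_add_one, Nat.sub_add_cancel hn0,
          ZMod.natCast_self]
      simp only [hf]
      rw [e0, hk2, ZMod.val_zero, hgetD (n - 1) (by omega), hgetD 0 hn0]
      have hlast : l.getLast hne = l.get ⟨n - 1, by omega⟩ := List.getLast_eq_getElem hne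
      have hhead : l.head hne = l.get ⟨0, hn0⟩ := (List.get_mk_zero hn0).symm
      rw [← hlast, ← hhead]
      exact hcl
  have key := nnc M1 M2 w I hI1 hI2 hmaxI n hn0 f hinj harc
  have e2 : ∀ j ∈ Finset.range n, cost w I (f ((j : ℕ) : ZMod n)) = cost w I (l.getD j d) := by
    intro j hj
    simp only [hf]
    rw [ZMod.val_cast_of_lt (Finset.mem_range.1 hj)]
  rw [Finset.sum_congr rfl e2] at key
  unfold costOf
  rw [list_map_sum_eq (cost w I) l d]
  exact key


/-- Let `I` be `w`-maximal in `𝓘1^k ∩ 𝓘2^k`. Any shortest cheapest `S_I`–`T_I` path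
in `D'[I]` (minimum cost, and minimum length among minimum-cost ones) is also a
shortest cheapest `S_I`–`T_I` path in `D[I]`. -/
theorem stmt_11 {α : Type} [Fintype α] (M1 M2 : FinMatroid α) (w : α → ℝ) (k : ℕ)
    (I : Finset α) (P : List α)
    (hI1 : M1.Indep I) (hI2 : M2.Indep I) (hIk : I.card = k)
    (hmax : ∀ J : Finset α, M1.Indep J → M2.Indep J → J.card = k → J.sum w ≤ I.sum w)
    (hP : IsPathFromTo (DArcs' M1 M2 I) (inS M1 I) (inT M2 I) P)
    (hcheap : ∀ Q, IsPathFromTo (DArcs' M1 M2 I) (inS M1 I) (inT M2 I) Q →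
      costOf w I P ≤ costOf w I Q)
    (hshort : ∀ Q, IsPathFromTo (DArcs' M1 M2 I) (inS M1 I) (inT M2 I) Q →
      costOf w I Q = costOf w I P → P.length ≤ Q.length) :
    IsPathFromTo (DArcs M1 M2 I) (inS M1 I) (inT M2 I) P ∧
    (∀ Q, IsPathFromTo (DArcs M1 M2 I) (inS M1 I) (inT M2 I) Q →
      costOf w I P ≤ costOf w I Q) ∧
    (∀ Q, IsPathFromTo (DArcs M1 M2 I) (inS M1 I) (inT M2 I) Q →
      costOf w I Q = costOf w I P → P.length ≤ Q.length) := by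
  classical
  have hmaxI : ∀ J : Finset α, M1.Indep J → M2.Indep J → J.card = I.card →
      J.sum w ≤ I.sum w := by
    intro J h1 h2 h3
    exact hmax J h1 h2 (by omega)
  -- D'-arcs are D-arcs
  have himp : ∀ a b : α, DArcs' M1 M2 I a b → DArcs M1 M2 I a b := by
    intro a b h
    rcases h with h | h
    · exact Or.inl h.1
    · exact Or.inr h.1
  have hPD : IsPathFromTo (DArcs M1 M2 I) (inS M1 I) (inT M2 I) P := by
    obtain ⟨hne, h1, h2, h3, h4⟩ := hP
    exact ⟨hne, h1, h2.imp himp, h3, h4⟩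
  -- finiteness of good paths
  have hfin : {Q : List α | IsPathFromTo (DArcs M1 M2 I) (inS M1 I) (inT M2 I) Q}.Finite := by
    apply Set.Finite.subset (List.finite_length_le α (Fintype.card α))
    intro Q hQ
    obtain ⟨_, hnd, _, _, _⟩ := hQ
    exact hnd.length_le_card
  obtain ⟨Q1, hQ1G, hQ1min⟩ := Set.exists_min_image _ (costOf w I) hfin ⟨P, hPD⟩
  have hfin2 : {Q : List α | IsPathFromTo (DArcs M1 M2 I) (inS M1 I) (inT M2 I) Q ∧
      costOf w I Q = costOf w I Q1}.Finite :=
    hfin.subset (fun Q hQ => hQ.1)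
  obtain ⟨Qm, hQmS, hQmlen⟩ := Set.exists_min_image _ (fun Q : List α => Q.length) hfin2
    ⟨Q1, hQ1G, rfl⟩
  obtain ⟨hQmG, hQmc⟩ := hQmS
  -- Qm is a D'-path
  obtain ⟨hne, hnd, hch, hS, hT⟩ := hQmG
  have hlen0 : 0 < Qm.length := List.length_pos_iff.2 hne
  have hhead : Qm.head hne = Qm.get ⟨0, hlen0⟩ := (List.get_mk_zero hlen0).symm
  have hQmG' : IsPathFromTo (DArcs' M1 M2 I) (inS M1 I) (inT M2 I) Qm := by
    refine ⟨hne, hnd, ?_, hS, hT⟩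
    refine List.isChain_iff_getElem.2 ?_
    intro i hi
    have hi1 : i + 1 < Qm.length := by omega
    have harc := List.isChain_iff_getElem.1 hch i hi
    -- common facts for both cases
    have hsplit : costOf w I Qm = costOf w I (Qm.take (i + 1)) + costOf w I (Qm.drop (i + 1)) := by
      unfold costOf
      conv_lhs => rw [← List.take_append_drop (i + 1) Qm]
      rw [List.map_append, List.sum_append]
    have htlen : (Qm.take (i + 1)).length = i + 1 := by
      rw [List.length_take]; omega
    have hdlen : (Qm.drop (i + 1)).length = Qm.length - (i + 1) := List.length_drop
    have htne : Qm.take (i + 1) ≠ [] := by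
      apply List.ne_nil_of_length_pos; omega
    have hdne : Qm.drop (i + 1) ≠ [] := by
      apply List.ne_nil_of_length_pos; omega
    have htake_last : (Qm.take (i + 1)).getLast htne = Qm.get ⟨i, by omega⟩ := by
      rw [List.getLast_eq_getElem, List.get_eq_getElem]
      simp only [htlen, Nat.add_sub_cancel]
      exact List.getElem_take
    have htake_head : (Qm.take (i + 1)).head htne = Qm.get ⟨0, hlen0⟩ := by
      rw [List.head_eq_getElem, List.get_eq_getElem]
      exact List.getElem_take
    have hdrop_head : (Qm.drop (i + 1)).head hdne = Qm.get ⟨i + 1, hi1⟩ := by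
      rw [List.head_drop, List.get_eq_getElem]
    have hdrop_last : (Qm.drop (i + 1)).getLast hdne = Qm.getLast hne := by
      rw [List.getLast_eq_getElem, List.getLast_eq_getElem, List.getElem_drop]
      congr 1
      omega
    rcases harc with h1 | h2
    · refine Or.inl ⟨h1, ?_⟩
      intro hSy
      -- suffix is a good path
      have hsufG : IsPathFromTo (DArcs M1 M2 I) (inS M1 I) (inT M2 I) (Qm.drop (i + 1)) := by
        refine ⟨hdne, hnd.sublist (List.drop_sublist _ _), hch.drop _, ?_, ?_⟩
        · rw [hdrop_head]; exact hSy
        · rw [hdrop_last]; exact hT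
      have h5 := hQ1min _ hsufG
      have hsufne : costOf w I (Qm.drop (i + 1)) ≠ costOf w I Q1 := by
        intro heq
        have := hQmlen (Qm.drop (i + 1)) ⟨hsufG, heq⟩
        omega
      have hpre_neg : costOf w I (Qm.take (i + 1)) < 0 := by
        have : costOf w I Q1 < costOf w I (Qm.drop (i + 1)) := lt_of_le_of_ne h5 (Ne.symm hsufne)
        rw [hQmc] at hsplit
        linarith
      -- the prefix closes into a cycle
      have hcyc := cycle_list_nonneg M1 M2 w I hI1 hI2 hmaxI (Qm.take (i + 1)) htne
        (hnd.sublist (List.take_sublist _ _)) (hch.take _) ?_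
      · linarith
      · rw [htake_last, htake_head]
        refine Or.inl ⟨h1.1, ?_, ?_⟩
        · rw [← hhead]; exact hS.1
        · apply M1.subset_indep hS.2
          rw [← hhead]
          exact Finset.insert_subset_insert _ (Finset.erase_subset _ _)
    · refine Or.inr ⟨h2, ?_⟩
      intro hTx
      have hpreG : IsPathFromTo (DArcs M1 M2 I) (inS M1 I) (inT M2 I) (Qm.take (i + 1)) := by
        refine ⟨htne, hnd.sublist (List.take_sublist _ _), hch.take _, ?_, ?_⟩
        · rw [htake_head, ← hhead]; exact hS
        · rw [htake_last]; exact hTx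
      have h5 := hQ1min _ hpreG
      have hprene : costOf w I (Qm.take (i + 1)) ≠ costOf w I Q1 := by
        intro heq
        have := hQmlen (Qm.take (i + 1)) ⟨hpreG, heq⟩
        omega
      have hsuf_neg : costOf w I (Qm.drop (i + 1)) < 0 := by
        have : costOf w I Q1 < costOf w I (Qm.take (i + 1)) := lt_of_le_of_ne h5 (Ne.symm hprene)
        rw [hQmc] at hsplit
        linarith
      have hcyc := cycle_list_nonneg M1 M2 w I hI1 hI2 hmaxI (Qm.drop (i + 1)) hdne
        (hnd.sublist (List.drop_sublist _ _)) (hch.drop _) ?_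
      · linarith
      · rw [hdrop_last, hdrop_head]
        refine Or.inr ⟨hT.1, h2.2.1, ?_⟩
        apply M2.subset_indep hT.2
        exact Finset.insert_subset_insert _ (Finset.erase_subset _ _)
  -- conclude
  have hcPQm : costOf w I Qm = costOf w I P := by
    have h6 := hcheap Qm hQmG'
    have h7 : costOf w I Q1 ≤ costOf w I P := hQ1min P hPD
    rw [hQmc]
    linarith
  refine ⟨hPD, ?_, ?_⟩
  · intro Q hQ
    have := hQ1min Q hQ
    rw [← hQmc] at this
    linarith [hcheap Qm hQmG']
  · intro Q hQ hQc
    have h8 : P.length ≤ Qm.length := hshort Qm hQmG' hcPQm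
    have h9 : Qm.length ≤ Q.length := by
      have : costOf w I Q = costOf w I Q1 := by rw [hQc, ← hcPQm, hQmc]
      exact hQmlen Q ⟨hQ, this⟩
    omega
end Main
end
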